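/- Let κ be a finite field with q elements and define ₁F₀(μ; x) = (1/(1-q)) ∑_{ν} ((μ)_ν/(ε)°_ν) ν(x), summed over all multiplicative characters ν of κ*. Then for x ∈ κ*, ₁F₀(μ; x) = μ̄(1-x) if μ ≠ ε, and ₁F₀(ε; x) = -q·δ(1-x) + 1, where δ(1-x) is 1 if x=1 and 0 otherwise. -/

import Mathlib

open scoped BigOperators

namespace KdF

variable {κ : Type*} [Field κ] [Fintype κ] [DecidableEq κ]

noncomputable instance : Fintype (MulChar κ ℂ) := Fintype.ofFinite _

/-- The Gauss sum `g(φ) = -∑ φ(x) ψ(x)`. -/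
noncomputable def g (ψ : AddChar κ ℂ) (φ : MulChar κ ℂ) : ℂ :=
  -∑ x : κ, φ x * ψ x

/-- The variant `g°(φ) = q^{δ(φ)} g(φ)`. -/
noncomputable def gc (ψ : AddChar κ ℂ) (φ : MulChar κ ℂ) : ℂ :=
  (if φ = 1 then (Fintype.card κ : ℂ) else 1) * g ψ φ

/-- Finite-field Pochhammer symbol `(α)_ν = g(αν)/g(α)`. -/
noncomputable def poch (ψ : AddChar κ ℂ) (α ν : MulChar κ ℂ) : ℂ :=
  g ψ (α * ν) / g ψ α

/-- Variant Pochhammer symbol `(α)°_ν = g°(αν)/g°(α)`. -/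
noncomputable def pochc (ψ : AddChar κ ℂ) (α ν : MulChar κ ℂ) : ℂ :=
  gc ψ (α * ν) / gc ψ α

/-- `₁F₀(μ; x)` over the finite field `κ`. -/
noncomputable def F10 (ψ : AddChar κ ℂ) (μ : MulChar κ ℂ) (x : κ) : ℂ :=
  (1 / (1 - (Fintype.card κ : ℂ))) *
    ∑ ν : MulChar κ ℂ, poch ψ μ ν / pochc ψ 1 ν * ν x

/-- `₂F₁(α, β; γ; x)` over the finite field `κ`. -/
noncomputable def F21 (ψ : AddChar κ ℂ) (α β γ : MulChar κ ℂ) (x : κ) : ℂ :=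
  (1 / (1 - (Fintype.card κ : ℂ))) *
    ∑ ν : MulChar κ ℂ,
      poch ψ α ν * poch ψ β ν / (pochc ψ γ ν * pochc ψ 1 ν) * ν x

/-- `₃F₂(α, β, γ; φ, ρ; x)` over the finite field `κ`. -/
noncomputable def F32 (ψ : AddChar κ ℂ) (α β γ φ ρ : MulChar κ ℂ) (x : κ) : ℂ :=
  (1 / (1 - (Fintype.card κ : ℂ))) *
    ∑ ν : MulChar κ ℂ,
      poch ψ α ν * poch ψ β ν * poch ψ γ ν /
        (pochc ψ φ ν * pochc ψ ρ ν * pochc ψ 1 ν) * ν x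

end KdF

open KdF

section Aux
variable {κ : Type*} [Field κ] [Fintype κ] [DecidableEq κ]

lemma g_eq_neg_gaussSum (ψ : AddChar κ ℂ) (φ : MulChar κ ℂ) : g ψ φ = -gaussSum φ ψ := rfl

lemma g_one (ψ : AddChar κ ℂ) (hψ : ψ ≠ 1) : g ψ (1 : MulChar κ ℂ) = 1 := by
  have h0 : ∑ x : κ, ψ x = 0 :=
    AddChar.sum_eq_zero_iff_ne_zero.mpr (by rwa [← AddChar.one_eq_zero])
  have h1 : ∀ x : κ, (1 : MulChar κ ℂ) x * ψ x = ψ x - (if x = 0 then 1 else 0) := by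
    intro x
    by_cases hx : x = 0
    · subst hx
      simp [MulChar.map_nonunit (1 : MulChar κ ℂ) not_isUnit_zero]
    · simp [MulChar.one_apply (isUnit_iff_ne_zero.mpr hx), hx]
  simp only [g, h1, Finset.sum_sub_distrib, h0, Finset.sum_ite_eq' Finset.univ (0 : κ),
    Finset.mem_univ, if_true]
  ring

lemma prim_of_ne_one {ψ : AddChar κ ℂ} (hψ : ψ ≠ 1) : ψ.IsPrimitive :=
  AddChar.IsPrimitive.of_ne_one hψ

lemma cardC_ne_zero : ((Fintype.card κ : ℂ)) ≠ 0 := Nat.cast_ne_zero.mpr Fintype.card_ne_zero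

lemma g_ne_zero {ψ : AddChar κ ℂ} (hψ : ψ ≠ 1) (φ : MulChar κ ℂ) : g ψ φ ≠ 0 := by
  by_cases hφ : φ = 1
  · rw [hφ, g_one ψ hψ]; exact one_ne_zero
  · rw [g_eq_neg_gaussSum, neg_ne_zero]
    exact gaussSum_ne_zero_of_nontrivial (cardC_ne_zero (κ := κ)) hφ (prim_of_ne_one hψ)

lemma gauss_mul_gauss_inv {ψ : AddChar κ ℂ} (hψ : ψ ≠ 1) {φ : MulChar κ ℂ} (hφ : φ ≠ 1) :
    gaussSum φ ψ * gaussSum φ⁻¹ ψ = φ (-1) * (Fintype.card κ : ℂ) := by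
  have h1 := gaussSum_mul_gaussSum_eq_card hφ (prim_of_ne_one hψ)
  have h2 := mul_gaussSum_inv_eq_gaussSum φ⁻¹ ψ
  have h3 : φ⁻¹ (-1 : κ) = φ (-1) := by rw [MulChar.inv_apply', inv_neg_one]
  rw [← h2, h3]
  rw [show gaussSum φ ψ * (φ (-1) * gaussSum φ⁻¹ ψ⁻¹) =
      φ (-1) * (gaussSum φ ψ * gaussSum φ⁻¹ ψ⁻¹) by ring, h1]

lemma neg_one_sq_eq {φ : MulChar κ ℂ} : φ (-1) * φ (-1) = 1 := by
  rw [← map_mul, neg_mul_neg, one_mul, map_one]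

end Aux

section Orth
variable {κ : Type*} [Field κ] [Fintype κ] [DecidableEq κ]

lemma sum_mulChars (a : κ) :
    ∑ ν : MulChar κ ℂ, ν a = if a = 1 then ((Fintype.card κ : ℂ) - 1) else 0 := by
  haveI : NeZero ((Monoid.exponent κˣ : ℂ)) :=
    ⟨Nat.cast_ne_zero.mpr Monoid.exponent_ne_zero_of_finite⟩
  split_ifs with ha
  · subst ha
    simp only [map_one]
    rw [Finset.sum_const, Finset.card_univ, nsmul_eq_mul, mul_one]
    have h := MulChar.card_eq_card_units_of_hasEnoughRootsOfUnity κ ℂ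
    rw [Nat.card_eq_fintype_card, Nat.card_eq_fintype_card] at h
    rw [h, Fintype.card_units]
    rw [Nat.cast_sub Fintype.card_pos, Nat.cast_one]
  · by_cases h0 : a = 0
    · subst h0
      exact Finset.sum_eq_zero fun ν _ ↦ ν.map_zero
    · obtain ⟨χ, hχ⟩ := MulChar.exists_apply_ne_one_of_hasEnoughRootsOfUnity κ ℂ ha
      refine eq_zero_of_mul_eq_self_left hχ ?_
      rw [Finset.mul_sum]
      simp only [← MulChar.mul_apply]
      exact Fintype.sum_bijective _ (Group.mulLeft_bijective χ) _ _ fun ν ↦ rfl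

end Orth

section Coeff
variable {κ : Type*} [Field κ] [Fintype κ] [DecidableEq κ]

lemma pochc_one_eq (ψ : AddChar κ ℂ) (hψ : ψ ≠ 1) (ν : MulChar κ ℂ) :
    pochc ψ 1 ν = (if ν = 1 then (Fintype.card κ : ℂ) else 1) * g ψ ν / (Fintype.card κ : ℂ) := by
  rw [pochc, one_mul, gc, gc, if_pos rfl, g_one ψ hψ, mul_one]

lemma coeff_eq {ψ : AddChar κ ℂ} (hψ : ψ ≠ 1) {μ : MulChar κ ℂ} (hμ : μ ≠ 1) (ν : MulChar κ ℂ) :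
    poch ψ μ ν / pochc ψ 1 ν = -jacobiSum ν⁻¹ μ⁻¹ := by
  have hq : ((Fintype.card κ : ℂ)) ≠ 0 := cardC_ne_zero
  have hprim := prim_of_ne_one hψ
  rw [poch, pochc_one_eq ψ hψ ν]
  by_cases hν : ν = 1
  · subst hν
    rw [if_pos rfl, mul_one, g_one ψ hψ, mul_one, div_self hq, div_one,
      div_self (g_ne_zero hψ μ), inv_one, jacobiSum_one_nontrivial (inv_ne_one.mpr hμ)]
    norm_num
  · rw [if_neg hν, one_mul]
    have hGμ : gaussSum μ ψ ≠ 0 := gaussSum_ne_zero_of_nontrivial hq hμ hprim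
    have hGν : gaussSum ν ψ ≠ 0 := gaussSum_ne_zero_of_nontrivial hq hν hprim
    have ha0 : μ (-1 : κ) ≠ 0 := fun h ↦ by
      simpa [h] using (neg_one_sq_eq (φ := μ))
    have hb0 : ν (-1 : κ) ≠ 0 := fun h ↦ by
      simpa [h] using (neg_one_sq_eq (φ := ν))
    by_cases hμν : μ * ν = 1
    · have hνμ : ν = μ⁻¹ := eq_inv_of_mul_eq_one_right hμν
      have hν' : ν⁻¹ = μ := by rw [hνμ, inv_inv]
      rw [hμν, g_one ψ hψ, hν', hνμ, jacobiSum_nontrivial_inv hμ, neg_neg]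
      have hmul : g ψ μ * g ψ μ⁻¹ = μ (-1) * (Fintype.card κ : ℂ) := by
        rw [g_eq_neg_gaussSum, g_eq_neg_gaussSum, neg_mul_neg]
        exact gauss_mul_gauss_inv hψ hμ
      rw [div_div_div_eq, one_mul, hmul, div_eq_iff (mul_ne_zero ha0 hq)]
      linear_combination (-(Fintype.card κ : ℂ)) * (neg_one_sq_eq (κ := κ) (φ := μ))
    · have hinv : ν⁻¹ * μ⁻¹ = (μ * ν)⁻¹ := by rw [mul_inv, mul_comm]
      have hμν' : ν⁻¹ * μ⁻¹ ≠ 1 := by rw [hinv]; exact inv_ne_one.mpr hμν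
      have hGμν : gaussSum (μ * ν) ψ ≠ 0 := gaussSum_ne_zero_of_nontrivial hq hμν hprim
      have hJ := jacobiSum_eq_gaussSum_mul_gaussSum_div_gaussSum hq hμν' hprim
      have hA' : gaussSum μ⁻¹ ψ = μ (-1) * (Fintype.card κ : ℂ) / gaussSum μ ψ := by
        rw [eq_div_iff hGμ, mul_comm]; exact gauss_mul_gauss_inv hψ hμ
      have hB' : gaussSum ν⁻¹ ψ = ν (-1) * (Fintype.card κ : ℂ) / gaussSum ν ψ := by
        rw [eq_div_iff hGν, mul_comm]; exact gauss_mul_gauss_inv hψ hν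
      have hC' : gaussSum (μ * ν)⁻¹ ψ =
          μ (-1) * ν (-1) * (Fintype.card κ : ℂ) / gaussSum (μ * ν) ψ := by
        rw [eq_div_iff hGμν, mul_comm, ← MulChar.mul_apply]
        exact gauss_mul_gauss_inv hψ hμν
      rw [hJ, hinv, hA', hB', hC', g_eq_neg_gaussSum, g_eq_neg_gaussSum, g_eq_neg_gaussSum]
      field_simp

lemma coeff_one_eq {ψ : AddChar κ ℂ} (hψ : ψ ≠ 1) (ν : MulChar κ ℂ) :
    poch ψ 1 ν / pochc ψ 1 ν =
      if ν = 1 then (1 : ℂ) else (Fintype.card κ : ℂ) := by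
  have hq : ((Fintype.card κ : ℂ)) ≠ 0 := cardC_ne_zero
  rw [poch, pochc_one_eq ψ hψ ν, one_mul, g_one ψ hψ, div_one]
  by_cases hν : ν = 1
  · subst hν
    rw [if_pos rfl, if_pos rfl, g_one ψ hψ, mul_one, div_self hq, div_one]
  · rw [if_neg hν, if_neg hν, one_mul, div_div_eq_mul_div, mul_comm,
      mul_div_assoc, div_self (g_ne_zero hψ ν), mul_one]

end Coeff

theorem stmt {κ : Type*} [Field κ] [Fintype κ] [DecidableEq κ]
    (ψ : AddChar κ ℂ) (hψ : ψ ≠ 1) (μ : MulChar κ ℂ) (x : κ) (hx : x ≠ 0) :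
    (μ ≠ 1 → F10 ψ μ x = μ⁻¹ (1 - x)) ∧
    (μ = 1 → F10 ψ μ x =
      -(Fintype.card κ : ℂ) * (if x = 1 then 1 else 0) + 1) := by
  have hq : ((Fintype.card κ : ℂ)) ≠ 0 := cardC_ne_zero
  have hq1 : (1 : ℂ) - (Fintype.card κ : ℂ) ≠ 0 := by
    have h2 : (1 : ℕ) < Fintype.card κ := Fintype.one_lt_card
    rw [sub_ne_zero]
    exact_mod_cast h2.ne
  constructor
  · intro hμ
    rw [F10]
    have hsum : ∑ ν : MulChar κ ℂ, jacobiSum ν⁻¹ μ⁻¹ * ν x =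
        ((Fintype.card κ : ℂ) - 1) * μ⁻¹ (1 - x) := by
      simp only [jacobiSum, Finset.sum_mul]
      rw [Finset.sum_comm]
      have h1 : ∀ y : κ, ∑ ν : MulChar κ ℂ, ν⁻¹ y * μ⁻¹ (1 - y) * ν x =
          μ⁻¹ (1 - y) *
            (if y⁻¹ * x = 1 then ((Fintype.card κ : ℂ) - 1) else 0) := by
        intro y
        rw [← sum_mulChars (y⁻¹ * x), Finset.mul_sum]
        refine Finset.sum_congr rfl fun ν _ ↦ ?_
        rw [map_mul, ← MulChar.inv_apply']
        ring
      rw [Finset.sum_congr rfl fun y _ ↦ h1 y, Finset.sum_eq_single x]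
      · rw [inv_mul_cancel₀ hx, if_pos rfl]
        ring
      · intro y _ hy
        have hne : y⁻¹ * x ≠ 1 := by
          rcases eq_or_ne y 0 with h | h
          · simp [h]
          · intro hc
            apply hy
            have h3 : y * (y⁻¹ * x) = y * 1 := congrArg _ hc
            rw [← mul_assoc, mul_inv_cancel₀ h, one_mul, mul_one] at h3
            exact h3.symm
        rw [if_neg hne, mul_zero]
      · exact fun h ↦ absurd (Finset.mem_univ x) h
    calc (1 / (1 - (Fintype.card κ : ℂ))) *
        ∑ ν : MulChar κ ℂ, poch ψ μ ν / pochc ψ 1 ν * ν x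
        = (1 / (1 - (Fintype.card κ : ℂ))) *
            ∑ ν : MulChar κ ℂ, -(jacobiSum ν⁻¹ μ⁻¹ * ν x) := by
          refine congrArg _ (Finset.sum_congr rfl fun ν _ ↦ ?_)
          rw [coeff_eq hψ hμ ν, neg_mul]
      _ = (1 / (1 - (Fintype.card κ : ℂ))) *
            -(((Fintype.card κ : ℂ) - 1) * μ⁻¹ (1 - x)) := by
          rw [Finset.sum_neg_distrib, hsum]
      _ = μ⁻¹ (1 - x) := by
          field_simp
          ring
  · intro hμ
    subst hμ
    rw [F10]
    have h1 : ∀ ν : MulChar κ ℂ, poch ψ 1 ν / pochc ψ 1 ν * ν x =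
        (Fintype.card κ : ℂ) * ν x +
          (if ν = (1 : MulChar κ ℂ) then (1 - (Fintype.card κ : ℂ)) * ν x else 0) := by
      intro ν
      rw [coeff_one_eq hψ ν]
      by_cases hν : ν = 1
      · rw [if_pos hν, if_pos hν]; ring
      · rw [if_neg hν, if_neg hν, add_zero]
    rw [Finset.sum_congr rfl fun ν _ ↦ h1 ν, Finset.sum_add_distrib, ← Finset.mul_sum,
      sum_mulChars, Finset.sum_ite_eq' Finset.univ (1 : MulChar κ ℂ)]
    have hone : (1 : MulChar κ ℂ) x = 1 := MulChar.one_apply (isUnit_iff_ne_zero.mpr hx)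
    rw [if_pos (Finset.mem_univ (1 : MulChar κ ℂ)), hone, mul_one]
    by_cases hx1 : x = 1
    · rw [if_pos hx1, if_pos hx1]
      field_simp
      ring
    · rw [if_neg hx1, if_neg hx1]
      field_simp
      ring
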